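/- If W^{≥a}[h] ≤ b for every h ∈ H, then E_{h1,h2}[⟨h1,h2⟩] − b·c(H) ≤ Σ_{|S|<a} Ĥ(S)^2 ≤ E_{h1,h2}[⟨h1,h2⟩]. -/

import Mathlib

/-- The character `χ_S(x) = ∏_{j ∈ S} x_j`, where `x ∈ {±1}^n` is modeled as
`Fin n → Bool` with `true ↦ -1`, `false ↦ 1`. -/
noncomputable def chi {n : ℕ} (S : Finset (Fin n)) (x : Fin n → Bool) : ℝ :=
  ∏ j ∈ S, (if x j then (-1 : ℝ) else 1)

/-- Fourier coefficient `f̂(S) = E_x[f(x) χ_S(x)]`, `x` uniform on `{±1}^n`. -/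
noncomputable def fCoeff {n : ℕ} (f : (Fin n → Bool) → ℝ) (S : Finset (Fin n)) : ℝ :=
  (1 / 2 ^ n : ℝ) * ∑ x : Fin n → Bool, f x * chi S x

/-- The high-degree Fourier weight `W^{≥a}[f] = ∑_{|S| ≥ a} f̂(S)^2`. -/
noncomputable def highWeight {n : ℕ} (f : (Fin n → Bool) → ℝ) (a : ℕ) : ℝ :=
  ∑ S ∈ Finset.univ.filter (fun S : Finset (Fin n) => a ≤ S.card), (fCoeff f S) ^ 2

/-! The characters are orthogonal, so Plancherel identifies the total Fourier weight of
`H = ∑ᵢ pᵢ fᵢ` with `∑ᵢⱼ pᵢ pⱼ ⟨fᵢ, fⱼ⟩`; this gives the upper bound. For the lower bound,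
Cauchy–Schwarz gives `Ĥ(S)² ≤ (∑ᵢ pᵢ²) ∑ᵢ f̂ᵢ(S)²`, and summing over `|S| ≥ a` bounds the
high-degree weight of `H` by `(∑ᵢ pᵢ²) · |H| · b = b · c(H)`. -/

lemma chi_mul_chi {n : ℕ} (S : Finset (Fin n)) (x y : Fin n → Bool) :
    chi S x * chi S y =
      ∏ j ∈ S, ((if x j then (-1 : ℝ) else 1) * (if y j then (-1 : ℝ) else 1)) := by
  rw [chi, chi, ← Finset.prod_mul_distrib]

lemma sign_mul_sign_add_one (u v : Bool) :
    (if u then (-1 : ℝ) else 1) * (if v then (-1 : ℝ) else 1) + 1 = if u = v then 2 else 0 := by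
  cases u <;> cases v <;> norm_num

lemma sum_chi_mul_chi {n : ℕ} (x y : Fin n → Bool) :
    ∑ S : Finset (Fin n), chi S x * chi S y = if x = y then (2 : ℝ) ^ n else 0 := by
  calc ∑ S : Finset (Fin n), chi S x * chi S y
      = ∏ j : Fin n, ((if x j then (-1 : ℝ) else 1) * (if y j then (-1 : ℝ) else 1) + 1) := by
        rw [Finset.prod_add_one, Finset.powerset_univ]
        simp only [chi_mul_chi]
    _ = ∏ j : Fin n, if x j = y j then (2 : ℝ) else 0 := by
        simp only [sign_mul_sign_add_one]
    _ = if x = y then (2 : ℝ) ^ n else 0 := by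
        simp [Finset.prod_ite_zero, funext_iff]

lemma sum_fCoeff_mul_fCoeff {n : ℕ} (f g : (Fin n → Bool) → ℝ) :
    ∑ S : Finset (Fin n), fCoeff f S * fCoeff g S
      = (1 / 2 ^ n : ℝ) * ∑ x : Fin n → Bool, f x * g x := by
  calc ∑ S : Finset (Fin n), fCoeff f S * fCoeff g S
      = (1 / 2 ^ n : ℝ) * (1 / 2 ^ n) * ∑ x : Fin n → Bool, ∑ y : Fin n → Bool,
          f x * g y * ∑ S : Finset (Fin n), chi S x * chi S y := by
        simp only [fCoeff, mul_mul_mul_comm _ (∑ x, _), Finset.sum_mul_sum, ← Finset.mul_sum,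
          mul_mul_mul_comm (f _)]
        rw [Finset.sum_comm]
        refine congrArg _ (Finset.sum_congr rfl fun x _ => ?_)
        rw [Finset.sum_comm]
        simp only [Finset.mul_sum]
    _ = (1 / 2 ^ n : ℝ) * (1 / 2 ^ n) * ∑ x : Fin n → Bool, f x * g x * 2 ^ n := by
        simp [sum_chi_mul_chi]
    _ = (1 / 2 ^ n : ℝ) * ∑ x : Fin n → Bool, f x * g x := by
        rw [← Finset.sum_mul]
        field_simp

lemma fCoeff_sum_mul {n : ℕ} {ι : Type*} [Fintype ι] (p : ι → ℝ)
    (f : ι → (Fin n → Bool) → ℝ) (S : Finset (Fin n)) :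
    fCoeff (fun x => ∑ i, p i * f i x) S = ∑ i, p i * fCoeff (f i) S := by
  simp only [fCoeff, Finset.mul_sum, Finset.sum_mul]
  rw [Finset.sum_comm]
  exact Finset.sum_congr rfl fun i _ => Finset.sum_congr rfl fun x _ => by ring

lemma sum_sq_fCoeff_sum_mul {n : ℕ} {ι : Type*} [Fintype ι] (p : ι → ℝ)
    (f : ι → (Fin n → Bool) → ℝ) :
    ∑ S : Finset (Fin n), fCoeff (fun x => ∑ i, p i * f i x) S ^ 2
      = ∑ i, ∑ j, p i * p j * ((1 / 2 ^ n : ℝ) * ∑ x : Fin n → Bool, f i x * f j x) := by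
  calc ∑ S : Finset (Fin n), fCoeff (fun x => ∑ i, p i * f i x) S ^ 2
      = ∑ S : Finset (Fin n), ∑ i, ∑ j, p i * fCoeff (f i) S * (p j * fCoeff (f j) S) := by
        simp only [sq, fCoeff_sum_mul, Finset.sum_mul_sum]
    _ = ∑ i, ∑ j, p i * p j * ∑ S : Finset (Fin n), fCoeff (f i) S * fCoeff (f j) S := by
        rw [Finset.sum_comm]
        refine Finset.sum_congr rfl fun i _ => ?_
        rw [Finset.sum_comm]
        simp only [Finset.mul_sum, mul_mul_mul_comm]
    _ = _ := by simp only [sum_fCoeff_mul_fCoeff]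

lemma sum_lowDegree_add_highWeight {n : ℕ} (F : (Fin n → Bool) → ℝ) (a : ℕ) :
    ∑ S ∈ Finset.univ.filter (fun S : Finset (Fin n) => S.card < a), fCoeff F S ^ 2
      + highWeight F a = ∑ S : Finset (Fin n), fCoeff F S ^ 2 := by
  simp only [highWeight, ← not_lt]
  exact Finset.sum_filter_add_sum_filter_not _ _ _

lemma highWeight_nonneg {n : ℕ} (F : (Fin n → Bool) → ℝ) (a : ℕ) : 0 ≤ highWeight F a :=
  Finset.sum_nonneg fun _ _ => sq_nonneg _

lemma highWeight_sum_mul_le {n : ℕ} {ι : Type*} [Fintype ι] (p : ι → ℝ)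
    (f : ι → (Fin n → Bool) → ℝ) (a : ℕ) :
    highWeight (fun x => ∑ i, p i * f i x) a ≤ (∑ i, p i ^ 2) * ∑ i, highWeight (f i) a := by
  simp only [highWeight, Finset.mul_sum]
  rw [Finset.sum_comm]
  refine Finset.sum_le_sum fun S _ => ?_
  rw [← Finset.mul_sum, fCoeff_sum_mul]
  exact Finset.sum_mul_sq_le_sq_mul_sq _ _ _

theorem stmt_5_general (n : ℕ) (ι : Type) [Fintype ι] (p : ι → ℝ)
    (f : ι → (Fin n → Bool) → ℝ)
    (a : ℕ) (b : ℝ) (hW : ∀ i, highWeight (f i) a ≤ b) :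
    (∑ i, ∑ j, p i * p j *
        ((1 / 2 ^ n : ℝ) * ∑ x : Fin n → Bool, f i x * f j x)) -
        b * ((Fintype.card ι : ℝ) * ∑ i, (p i) ^ 2) ≤
      ∑ S ∈ Finset.univ.filter (fun S : Finset (Fin n) => S.card < a),
        (fCoeff (fun x => ∑ i, p i * f i x) S) ^ 2 ∧
    ∑ S ∈ Finset.univ.filter (fun S : Finset (Fin n) => S.card < a),
        (fCoeff (fun x => ∑ i, p i * f i x) S) ^ 2 ≤
      ∑ i, ∑ j, p i * p j *
        ((1 / 2 ^ n : ℝ) * ∑ x : Fin n → Bool, f i x * f j x) := by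
  have hsplit := sum_lowDegree_add_highWeight (fun x => ∑ i, p i * f i x) a
  rw [sum_sq_fCoeff_sum_mul] at hsplit
  have hhigh : highWeight (fun x => ∑ i, p i * f i x) a
      ≤ b * ((Fintype.card ι : ℝ) * ∑ i, p i ^ 2) :=
    calc highWeight (fun x => ∑ i, p i * f i x) a
        ≤ (∑ i, p i ^ 2) * ∑ i, highWeight (f i) a := highWeight_sum_mul_le p f a
      _ ≤ (∑ i, p i ^ 2) * ∑ _i : ι, b := by
        gcongr with i
        exact hW i
      _ = b * ((Fintype.card ι : ℝ) * ∑ i, p i ^ 2) := by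
        rw [Finset.sum_const, Finset.card_univ, nsmul_eq_mul]
        ring
  have hnonneg := highWeight_nonneg (fun x => ∑ i, p i * f i x) a
  constructor <;> linarith

/-- if `W^{≥a}[h] ≤ b` for every `h ∈ H`, then
`E_{h1,h2}⟨h1,h2⟩ − b·c(H) ≤ ∑_{|S|<a} Ĥ(S)^2 ≤ E_{h1,h2}⟨h1,h2⟩`,
where `⟨f,g⟩ = E_x[f(x)g(x)]`, `H(x) = E_h[h(x)]`, and
`c(H) = |H| · ∑_h Pr(h)^2`. -/
theorem stmt_5 (n : ℕ) (ι : Type) [Fintype ι] (p : ι → ℝ)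
    (hp0 : ∀ i, 0 ≤ p i) (hp1 : ∑ i, p i = 1)
    (f : ι → (Fin n → Bool) → ℝ)
    (hf : ∀ i x, f i x = 1 ∨ f i x = -1)
    (a : ℕ) (b : ℝ) (hW : ∀ i, highWeight (f i) a ≤ b) :
    (∑ i, ∑ j, p i * p j *
        ((1 / 2 ^ n : ℝ) * ∑ x : Fin n → Bool, f i x * f j x)) -
        b * ((Fintype.card ι : ℝ) * ∑ i, (p i) ^ 2) ≤
      ∑ S ∈ Finset.univ.filter (fun S : Finset (Fin n) => S.card < a),
        (fCoeff (fun x => ∑ i, p i * f i x) S) ^ 2 ∧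
    ∑ S ∈ Finset.univ.filter (fun S : Finset (Fin n) => S.card < a),
        (fCoeff (fun x => ∑ i, p i * f i x) S) ^ 2 ≤
      ∑ i, ∑ j, p i * p j *
        ((1 / 2 ^ n : ℝ) * ∑ x : Fin n → Bool, f i x * f j x) :=
  stmt_5_general n ι p f a b hW
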